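/- Let G = ⟨a⟩ × ⟨b⟩ be free abelian of rank two and A a Schur ring over G. If there exists a nonzero integer k such that ⟨a^k⟩ is an A-subgroup, then ⟨a⟩ itself is an A-subgroup. -/

import Mathlib

noncomputable def simpleQuantity (F : Type*) [Field F] {G : Type*} [Group G]
    (D : Finset G) : MonoidAlgebra F G :=
  ∑ g ∈ D, MonoidAlgebra.single g 1

structure SchurRing (F G : Type*) [Field F] [Group G] where
  parts : Set (Finset G)
  parts_nonempty : ∀ D ∈ parts, D.Nonempty
  cover : ∀ g : G, ∃ D ∈ parts, g ∈ D
  eq_of_mem : ∀ D₁ ∈ parts, ∀ D₂ ∈ parts, ∀ g : G, g ∈ D₁ → g ∈ D₂ → D₁ = D₂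
  one_mem : ({1} : Finset G) ∈ parts
  inv_mem : ∀ D ∈ parts, ∃ D' ∈ parts, ∀ g : G, g ∈ D' ↔ g⁻¹ ∈ D
  mul_mem : ∀ x ∈ Submodule.span F (simpleQuantity F '' parts),
    ∀ y ∈ Submodule.span F (simpleQuantity F '' parts),
    x * y ∈ Submodule.span F (simpleQuantity F '' parts)

noncomputable def SchurRing.span {F G : Type*} [Field F] [Group G] (A : SchurRing F G) :
    Submodule F (MonoidAlgebra F G) :=
  Submodule.span F (simpleQuantity F '' A.parts)

def SchurRing.IsASet {F G : Type*} [Field F] [Group G] (A : SchurRing F G)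
    (S : Set G) : Prop :=
  ∀ D ∈ A.parts, (∃ g ∈ D, g ∈ S) → ↑D ⊆ S

/-- The free abelian group of rank two, written multiplicatively. -/
abbrev Z2 := Multiplicative (ℤ × ℤ)

/-- The first generator `a` of `Z × Z`. -/
def ga : Z2 := Multiplicative.ofAdd (1, 0)

/-- The second generator `b` of `Z × Z`. -/
def gb : Z2 := Multiplicative.ofAdd (0, 1)

/-!
Wielandt's trick: modulo a prime `p`, the `p`-th power of the simple quantity of a basic set `D`
is the simple quantity of `{d ^ p | d ∈ D}`, so for `g ∈ D` the basic set of `g ^ p` consists of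
`p`-th powers of elements of `D` (in a torsion-free abelian group). Take `g ∈ D ∩ ⟨a⟩` and a
prime `p ≡ 1 [MOD k]`, so that `g ^ (p - 1) ∈ ⟨a ^ k⟩`. Since `g = g ^ p * g ^ (1 - p)` and the
basic set of `g ^ (1 - p)` lies in `⟨a ^ k⟩`, every `d ∈ D` is `d' ^ p * h` with `d' ∈ D` and
`h ∈ ⟨a⟩`. So the `b`-exponents occurring in `D` are `p` times others occurring in `D`, and
therefore all vanish.
-/

theorem Subgroup.zpow_mem_zpowers_zpow {G : Type*} [Group G] {a g : G}
    (hg : g ∈ Subgroup.zpowers a) {k m : ℤ} (hkm : k ∣ m) : g ^ m ∈ Subgroup.zpowers (a ^ k) := by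
  obtain ⟨n, rfl⟩ := hg
  obtain ⟨c, rfl⟩ := hkm
  exact ⟨n * c, by simp only [← zpow_mul]; ring_nf⟩

theorem Int.eq_zero_of_forall_mem_exists_eq_mul {S : Set ℤ} {p : ℤ} (hp : 1 < p.natAbs)
    (hS : ∀ y ∈ S, ∃ z ∈ S, y = p * z) {x : ℤ} (hx : x ∈ S) : x = 0 := by
  have hdvd : ∀ n : ℕ, ∀ y ∈ S, p ^ n ∣ y := by
    intro n
    induction n with
    | zero => simp
    | succ n ih =>
      intro y hy
      obtain ⟨z, hz, rfl⟩ := hS y hy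
      rw [pow_succ']
      exact mul_dvd_mul_left _ (ih z hz)
  refine Int.eq_zero_of_dvd_of_natAbs_lt_natAbs (hdvd x.natAbs x hx) ?_
  simpa [Int.natAbs_pow] using Nat.lt_pow_self hp

open MonoidAlgebra Finset

theorem coeff_sum_single_pow_charP {G : Type*} [CommGroup G] [DecidableEq G] (p : ℕ)
    [Fact p.Prime] (D : Finset G) (t : G) :
    (((∑ g ∈ D, single g (1 : ℕ)) ^ p).coeff t : ZMod p) = #{d ∈ D | d ^ p = t} := by
  have : CharP (MonoidAlgebra (ZMod p) G) p := charP_of_injective_algebraMap' (ZMod p) p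
  -- the Frobenius endomorphism of the commutative ring `(ZMod p)[G]`
  have hfrob : mapRingHom G (Nat.castRingHom (ZMod p)) ((∑ g ∈ D, single g 1) ^ p)
      = ∑ d ∈ D, single (d ^ p) 1 := by
    simp [map_sum, sum_pow_char]
  rw [← eq_natCast (Nat.castRingHom (ZMod p)), ← coeff_mapRingHom, hfrob]
  simp [coeff_sum, coeff_single, Finsupp.single_apply, Finsupp.finsetSum_apply, Finset.sum_boole]

section SimpleQuantity

variable {F G : Type*} [Field F] [Group G]

theorem coeff_simpleQuantity [DecidableEq G] (D : Finset G) (t : G) :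
    (simpleQuantity F D).coeff t = if t ∈ D then 1 else 0 := by
  simp [simpleQuantity, coeff_sum, coeff_single, Finsupp.single_apply]

theorem coeff_simpleQuantity_mul [DecidableEq G] (X Y : Finset G) (t : G) :
    (simpleQuantity F X * simpleQuantity F Y).coeff t = #{q ∈ X ×ˢ Y | q.1 * q.2 = t} := by
  simp only [simpleQuantity, Finset.sum_mul_sum, single_mul_single, one_mul,
    ← Finset.sum_product', coeff_sum, Finsupp.finsetSum_apply, coeff_single,
    Finsupp.single_apply, Finset.sum_boole]

theorem simpleQuantity_eq_map (D : Finset G) :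
    simpleQuantity F D = mapRingHom G (Nat.castRingHom F) (∑ g ∈ D, single g 1) := by
  simp [simpleQuantity]

end SimpleQuantity

namespace SchurRing

section Group

variable {F G : Type*} [Field F] [Group G] (A : SchurRing F G)

theorem simpleQuantity_mem_span {D : Finset G} (hD : D ∈ A.parts) :
    simpleQuantity F D ∈ A.span :=
  Submodule.subset_span ⟨D, hD, rfl⟩

theorem pow_mem_span {x : MonoidAlgebra F G} (hx : x ∈ A.span) {n : ℕ} (hn : n ≠ 0) :
    x ^ n ∈ A.span := by
  induction n with
  | zero => exact absurd rfl hn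
  | succ n ih =>
    rcases eq_or_ne n 0 with rfl | hn'
    · simpa using hx
    · rw [pow_succ]
      exact A.mul_mem _ (ih hn') _ hx

theorem coeff_eq_of_mem_part {x : MonoidAlgebra F G} (hx : x ∈ A.span) {D : Finset G}
    (hD : D ∈ A.parts) {g₁ g₂ : G} (h₁ : g₁ ∈ D) (h₂ : g₂ ∈ D) : x.coeff g₁ = x.coeff g₂ := by
  classical
  induction hx using Submodule.span_induction with
  | mem x hx =>
    obtain ⟨D', hD', rfl⟩ := hx
    have hiff : g₁ ∈ D' ↔ g₂ ∈ D' :=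
      ⟨fun h => A.eq_of_mem D hD D' hD' g₁ h₁ h ▸ h₂,
        fun h => A.eq_of_mem D hD D' hD' g₂ h₂ h ▸ h₁⟩
    simp only [coeff_simpleQuantity, hiff]
  | zero => rfl
  | add x y _ _ hx hy => simp only [coeff_add, Finsupp.add_apply, hx, hy]
  | smul c x _ hx => simp only [coeff_smul, Finsupp.smul_apply, hx]

theorem exists_mul_eq_of_mem_part [CharZero F] {X Y D : Finset G} (hX : X ∈ A.parts)
    (hY : Y ∈ A.parts) (hD : D ∈ A.parts) {x₀ y₀ : G} (hx₀ : x₀ ∈ X) (hy₀ : y₀ ∈ Y)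
    (hxy : x₀ * y₀ ∈ D) {d : G} (hd : d ∈ D) : ∃ x ∈ X, ∃ y ∈ Y, x * y = d := by
  classical
  have hco := A.coeff_eq_of_mem_part
    (A.mul_mem _ (A.simpleQuantity_mem_span hX) _ (A.simpleQuantity_mem_span hY)) hD hd hxy
  simp only [coeff_simpleQuantity_mul, Nat.cast_inj] at hco
  have hpos : 0 < #{q ∈ X ×ˢ Y | q.1 * q.2 = d} :=
    hco ▸ Finset.card_pos.mpr ⟨(x₀, y₀), by simp [hx₀, hy₀]⟩
  obtain ⟨⟨x, y⟩, hq⟩ := Finset.card_pos.mp hpos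
  simp only [Finset.mem_filter, Finset.mem_product] at hq
  exact ⟨x, hq.1.1, y, hq.1.2, hq.2⟩

end Group

section TorsionFree

variable {F G : Type*} [Field F] [CharZero F] [CommGroup G] [IsMulTorsionFree G]
  (A : SchurRing F G)

theorem exists_pow_eq_of_mem_part {D E : Finset G} (hD : D ∈ A.parts) (hE : E ∈ A.parts) {p : ℕ}
    (hp : p.Prime) {g : G} (hg : g ∈ D) (hgE : g ^ p ∈ E) {e : G} (he : e ∈ E) :
    ∃ d ∈ D, d ^ p = e := by
  classical
  have : Fact p.Prime := ⟨hp⟩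
  have hco := A.coeff_eq_of_mem_part
    (A.pow_mem_span (A.simpleQuantity_mem_span hD) hp.ne_zero) hE he hgE
  rw [simpleQuantity_eq_map, ← map_pow, coeff_mapRingHom, coeff_mapRingHom,
    eq_natCast, eq_natCast, Nat.cast_inj] at hco
  have hmod := congrArg (Nat.cast : ℕ → ZMod p) hco
  rw [coeff_sum_single_pow_charP, coeff_sum_single_pow_charP] at hmod
  have hg_only : {d ∈ D | d ^ p = g ^ p} = {g} := by
    ext d
    simp only [mem_filter, mem_singleton, pow_left_inj hp.ne_zero]
    exact ⟨And.right, fun h => ⟨h ▸ hg, h⟩⟩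
  rw [hg_only, card_singleton, Nat.cast_one] at hmod
  obtain ⟨d, hd⟩ : {d ∈ D | d ^ p = e}.Nonempty := by
    rw [← card_pos, Nat.pos_iff_ne_zero]
    rintro h0
    simp [h0] at hmod
  exact ⟨d, (mem_filter.mp hd).1, (mem_filter.mp hd).2⟩

theorem exists_pow_mul_eq_of_mem_part {H : Subgroup G} (hH : A.IsASet H) {D : Finset G}
    (hD : D ∈ A.parts) {p : ℕ} (hp : p.Prime) {g : G} (hg : g ∈ D) (hgH : g ^ (p - 1) ∈ H)
    {d : G} (hd : d ∈ D) : ∃ d' ∈ D, ∃ h ∈ H, d' ^ p * h = d := by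
  obtain ⟨E, hE, hgE⟩ := A.cover (g ^ p)
  obtain ⟨W, hW, hgW⟩ := A.cover (g ^ (p - 1))⁻¹
  have hg' : g ^ p * (g ^ (p - 1))⁻¹ ∈ D := by
    rwa [← pow_sub_one_mul hp.ne_zero, mul_inv_cancel_comm]
  obtain ⟨e, he, w, hw, rfl⟩ := A.exists_mul_eq_of_mem_part hE hW hD hgE hgW hg' hd
  obtain ⟨d', hd', rfl⟩ := A.exists_pow_eq_of_mem_part hD hE hp hg hgE he
  exact ⟨d', hd', w, hH W hW ⟨_, hgW, H.inv_mem hgH⟩ hw, rfl⟩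

end TorsionFree

end SchurRing

def Z2.snd (g : Z2) : ℤ := (Multiplicative.toAdd g).2

@[simp] theorem Z2.snd_mul (g h : Z2) : Z2.snd (g * h) = Z2.snd g + Z2.snd h := rfl

@[simp] theorem Z2.snd_pow (g : Z2) (n : ℕ) : Z2.snd (g ^ n) = n * Z2.snd g := by
  simp [Z2.snd]

theorem mem_zpowers_ga_iff {g : Z2} : g ∈ Subgroup.zpowers ga ↔ Z2.snd g = 0 := by
  refine ⟨?_, fun h => ⟨(Multiplicative.toAdd g).1, ?_⟩⟩
  · rintro ⟨n, rfl⟩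
    simp [Z2.snd, ga]
  · apply Multiplicative.toAdd.injective
    simp_all [Z2.snd, ga, Prod.ext_iff]

/-- If `⟨a^k⟩` is an `A`-subgroup for some nonzero `k`, then `⟨a⟩` is an
`A`-subgroup. -/
theorem zpowers_isASet {F : Type*} [Field F] [CharZero F] (A : SchurRing F Z2)
    (k : ℤ) (hk : k ≠ 0) (h : A.IsASet ↑(Subgroup.zpowers (ga ^ k))) :
    A.IsASet ↑(Subgroup.zpowers ga) := by
  rintro D hD ⟨g, hgD, hga⟩
  obtain ⟨p, hp, -, hpk⟩ := Nat.exists_prime_gt_modEq_one 0 (Int.natAbs_ne_zero.mpr hk)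
  have hkp : k ∣ ((p - 1 : ℕ) : ℤ) :=
    Int.natAbs_dvd.mp (Int.natCast_dvd_natCast.mpr ((Nat.modEq_iff_dvd' hp.one_le).mp hpk.symm))
  have hgH : g ^ (p - 1) ∈ Subgroup.zpowers (ga ^ k) := by
    simpa using Subgroup.zpow_mem_zpowers_zpow hga hkp
  have hHa : Subgroup.zpowers (ga ^ k) ≤ Subgroup.zpowers ga :=
    Subgroup.zpowers_le.mpr (Subgroup.zpow_mem_zpowers ga k)
  have hdil : ∀ y ∈ Z2.snd '' D, ∃ z ∈ Z2.snd '' D, y = p * z := by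
    rintro _ ⟨d, hd, rfl⟩
    obtain ⟨d', hd', w, hw, rfl⟩ := A.exists_pow_mul_eq_of_mem_part h hD hp hgD hgH hd
    refine ⟨Z2.snd d', ⟨d', hd', rfl⟩, ?_⟩
    simp [mem_zpowers_ga_iff.mp (hHa hw)]
  intro d hd
  exact mem_zpowers_ga_iff.mpr
    (Int.eq_zero_of_forall_mem_exists_eq_mul (by simpa using hp.one_lt) hdil ⟨d, hd, rfl⟩)
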